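/- arXiv:2412.20395 — 2 statements merged into one kernel-verified Lean document; each statement's English description precedes it below -/
import Mathlib

section
/- The dual objective G(p) = Σ_j N^S_j·Π^S_j(p) + Σ_{(t,w)} N^D_{(t,w)}·Π^D_{(t,w)}(p), where each Π^S_j(p) = -(1/θ)ln Σ_{t∈T̃} exp(-θ(C^S_{j,t} + p_{(t,j)})) (with p_{(0,j)} := 0) and each Π^D is a logit expected minimum with additive costs of the form C - Σ_j δ_{r,j} p_{(t,j)}, is a concave and differentiable function of the price vector p, and its gradient with respect to p_{(t,j)} equals the excess demand y*_{j,t}(p) - Σ_{w} Σ_r δ_{r,j} f*_{(t,w),r}(p), where y* and f* are the corresponding logit demand functions. -/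
section

variable {J Tt W Rb : Type*} [Fintype J] [Fintype Tt] [Fintype W] [Fintype Rb]

/-- Logit shipper surplus `Π^S_j(p)` (opt-out cost `CS0 j`, price 0). -/
noncomputable def PiS (θ : ℝ) (CS0 : J → ℝ) (CS : J → Tt → ℝ) (j : J)
    (p : Tt × J → ℝ) : ℝ :=
  -(1 / θ) * Real.log (Real.exp (-θ * CS0 j) +
    ∑ t, Real.exp (-θ * (CS j t + p (t, j))))

/-- Logit driver surplus `Π^D_{(t,w)}(p)` with additive bundle rewards. -/
noncomputable def PiD (φ : ℝ) (CD0 : Tt → W → ℝ) (CD : Tt → W → Rb → ℝ)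
    (δ : Rb → J → ℕ) (t : Tt) (w : W) (p : Tt × J → ℝ) : ℝ :=
  -(1 / φ) * Real.log (Real.exp (-φ * CD0 t w) +
    ∑ r, Real.exp (-φ * (CD t w r - ∑ j, (δ r j : ℝ) * p (t, j))))

/-- Dual objective `G(p) = Σ_j N^S_j Π^S_j(p) + Σ_{(t,w)} N^D_{(t,w)} Π^D_{(t,w)}(p)`. -/
noncomputable def dualG (θ φ : ℝ) (NS : J → ℝ) (ND : Tt → W → ℝ)
    (CS0 : J → ℝ) (CS : J → Tt → ℝ) (CD0 : Tt → W → ℝ) (CD : Tt → W → Rb → ℝ)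
    (δ : Rb → J → ℕ) (p : Tt × J → ℝ) : ℝ :=
  (∑ j, NS j * PiS θ CS0 CS j p) + ∑ t, ∑ w, ND t w * PiD φ CD0 CD δ t w p

/-- Logit shipper demand `y*_{j,t}(p)`. -/
noncomputable def ystar (θ : ℝ) (NS : J → ℝ) (CS0 : J → ℝ) (CS : J → Tt → ℝ)
    (j : J) (t : Tt) (p : Tt × J → ℝ) : ℝ :=
  NS j * Real.exp (-θ * (CS j t + p (t, j) - PiS θ CS0 CS j p))

/-- Logit driver demand `f*_{(t,w),r}(p)`. -/
noncomputable def fstar (φ : ℝ) (ND : Tt → W → ℝ) (CD0 : Tt → W → ℝ)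
    (CD : Tt → W → Rb → ℝ) (δ : Rb → J → ℕ) (t : Tt) (w : W) (r : Rb)
    (p : Tt × J → ℝ) : ℝ :=
  ND t w * Real.exp (-φ * (CD t w r - (∑ j, (δ r j : ℝ) * p (t, j)) -
    PiD φ CD0 CD δ t w p))

end

/-!
Each surplus is a logit expected minimum `-(1/c) log (e^{-c a₀} + Σᵢ e^{-c aᵢ})` of costs `aᵢ`
that are affine in the prices. Log-sum-exp of convex functions is convex (Hölder's inequality
on `Σ e^{a xᵢ + b yᵢ}`), so each surplus, and hence `G`, is concave. The partial derivative of
the expected minimum in `aᵢ` is the logit choice probability `e^{-c (aᵢ - Π)}`; a price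
`p (t, j)` enters the shipper cost of `(j, t)` with coefficient `1` and the driver cost of a
bundle `r` with coefficient `-δ r j`, which yields the excess demand.
-/

open Real Finset

theorem sum_rpow_mul_rpow_le {ι : Type*} (s : Finset ι) {u v : ι → ℝ}
    (hu : ∀ i ∈ s, 0 ≤ u i) (hv : ∀ i ∈ s, 0 ≤ v i) {a b : ℝ} (ha : 0 < a) (hb : 0 < b)
    (hab : a + b = 1) :
    ∑ i ∈ s, u i ^ a * v i ^ b ≤ (∑ i ∈ s, u i) ^ a * (∑ i ∈ s, v i) ^ b := by
  have hpq : HolderConjugate a⁻¹ b⁻¹ := .inv_inv ha hb hab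
  have h := inner_le_Lp_mul_Lq_of_nonneg s hpq (fun i hi => rpow_nonneg (hu i hi) a)
    (fun i hi => rpow_nonneg (hv i hi) b)
  simp only [one_div, inv_inv] at h
  convert h using 3 <;> refine sum_congr rfl fun i hi => ?_
  · rw [← rpow_mul (hu i hi), mul_inv_cancel₀ ha.ne', rpow_one]
  · rw [← rpow_mul (hv i hi), mul_inv_cancel₀ hb.ne', rpow_one]

theorem ConvexOn.log_sum_exp {E ι : Type*} [AddCommGroup E] [Module ℝ E] [Fintype ι]
    [Nonempty ι] {s : Set E} {g : ι → E → ℝ} (hg : ∀ i, ConvexOn ℝ s (g i)) (hs : Convex ℝ s) :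
    ConvexOn ℝ s fun x => log (∑ i, exp (g i x)) := by
  refine convexOn_iff_forall_pos.2 ⟨hs, fun x hx y hy a b ha hb hab => ?_⟩
  have hpos : ∀ z, 0 < ∑ i, exp (g i z) := fun z => by positivity
  calc log (∑ i, exp (g i (a • x + b • y)))
      ≤ log (∑ i, exp (g i x) ^ a * exp (g i y) ^ b) := by
        refine log_le_log (hpos _) (sum_le_sum fun i _ => ?_)
        rw [← exp_mul, ← exp_mul, ← exp_add, exp_le_exp, mul_comm _ a, mul_comm _ b]
        exact (hg i).2 hx hy ha.le hb.le hab
    _ ≤ log ((∑ i, exp (g i x)) ^ a * (∑ i, exp (g i y)) ^ b) :=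
        log_le_log (by positivity) <| sum_rpow_mul_rpow_le _ (fun i _ => (exp_pos _).le)
          (fun i _ => (exp_pos _).le) ha hb hab
    _ = a • log (∑ i, exp (g i x)) + b • log (∑ i, exp (g i y)) := by
        rw [log_mul (by positivity) (by positivity), log_rpow (hpos x), log_rpow (hpos y)]
        rfl

theorem ConcaveOn.sum {E ι : Type*} [AddCommGroup E] [Module ℝ E] {s : Set E}
    {t : Finset ι} {f : ι → E → ℝ} (hf : ∀ i ∈ t, ConcaveOn ℝ s (f i)) (hs : Convex ℝ s) :
    ConcaveOn ℝ s fun x => ∑ i ∈ t, f i x := by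
  induction t using Finset.cons_induction with
  | empty => simpa using concaveOn_const 0 hs
  | cons i t hi ih =>
    simp only [sum_cons]
    exact (hf i (mem_cons_self i t)).add (ih fun j hj => hf j (mem_cons_of_mem hj))

theorem hasDerivAt_update_apply {ι : Type*} [Fintype ι] [DecidableEq ι] (p : ι → ℝ)
    (q q' : ι) :
    HasDerivAt (fun z => Function.update p q z q') ((Pi.single q 1 : ι → ℝ) q') (p q) :=
  hasDerivAt_pi.1 (hasDerivAt_update p q _) q'

/-- The expected minimum of the costs `a₀` (opt-out) and `a i` perturbed by i.i.d. Gumbel noise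
of scale `1 / c`; `PiS` and `PiD` unfold to it. -/
noncomputable def logitExpectedMin {ι : Type*} [Fintype ι] (c a₀ : ℝ) (a : ι → ℝ) : ℝ :=
  -(1 / c) * log (exp (-c * a₀) + ∑ i, exp (-c * a i))

section LogitExpectedMin

variable {ι : Type*} [Fintype ι] {c : ℝ} (a₀ : ℝ)

theorem concaveOn_logitExpectedMin {E : Type*} [AddCommGroup E] [Module ℝ E] {s : Set E}
    (hc : 0 < c) {a : ι → E → ℝ} (ha : ∀ i, ConcaveOn ℝ s (a i)) (hs : Convex ℝ s) :
    ConcaveOn ℝ s fun x => logitExpectedMin c a₀ fun i => a i x := by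
  have hlse : ConvexOn ℝ s fun x =>
      log (∑ o : Option ι, exp (o.elim (-c * a₀) fun i => -c * a i x)) := by
    refine ConvexOn.log_sum_exp (fun o => ?_) hs
    cases o with
    | none => exact convexOn_const _ hs
    | some i => exact ((ha i).smul hc.le).neg.congr fun x _ => by simp
  refine (hlse.smul (one_div_pos.2 hc).le).neg.congr fun x _ => ?_
  simp [logitExpectedMin, Fintype.sum_option]

theorem exp_neg_mul_sub_logitExpectedMin (hc : c ≠ 0) (a : ι → ℝ) (b : ℝ) :
    exp (-c * (b - logitExpectedMin c a₀ a)) =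
      exp (-c * b) / (exp (-c * a₀) + ∑ i, exp (-c * a i)) := by
  have hZ : 0 < exp (-c * a₀) + ∑ i, exp (-c * a i) := by positivity
  have hexp : -c * (b - logitExpectedMin c a₀ a) =
      -c * b - log (exp (-c * a₀) + ∑ i, exp (-c * a i)) := by
    rw [logitExpectedMin]
    field_simp
    ring
  rw [hexp, exp_sub, exp_log hZ]

theorem hasDerivAt_logitExpectedMin (hc : c ≠ 0) {a : ℝ → ι → ℝ} {a' : ι → ℝ} {x : ℝ}
    (ha : ∀ i, HasDerivAt (fun z => a z i) (a' i) x) :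
    HasDerivAt (fun z => logitExpectedMin c a₀ (a z))
      (∑ i, a' i * exp (-c * (a x i - logitExpectedMin c a₀ (a x)))) x := by
  have hZ : 0 < exp (-c * a₀) + ∑ i, exp (-c * a x i) := by positivity
  have hsum := (HasDerivAt.fun_sum (u := univ) fun i _ => ((ha i).const_mul (-c)).exp).const_add
    (exp (-c * a₀))
  refine ((hsum.log hZ.ne').const_mul (-(1 / c))).congr_deriv ?_
  simp only [exp_neg_mul_sub_logitExpectedMin a₀ hc, mul_div_assoc', ← sum_div]
  field_simp
  rw [sum_neg_distrib, neg_neg, mul_sum]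
  exact sum_congr rfl fun i _ => by ring

theorem differentiable_logitExpectedMin {E : Type*} [NormedAddCommGroup E] [NormedSpace ℝ E]
    {a : E → ι → ℝ} (ha : ∀ i, Differentiable ℝ fun x => a x i) :
    Differentiable ℝ fun x => logitExpectedMin c a₀ (a x) := by
  refine .const_mul (.log ?_ fun x => by positivity) _
  exact (differentiable_const _).add (.fun_sum fun i _ => ((ha i).const_mul _).exp)

end LogitExpectedMin

section Model

variable {J Tt W Rb : Type*} {θ φ : ℝ} (NS : J → ℝ) (ND : Tt → W → ℝ) (CS0 : J → ℝ)
  (CS : J → Tt → ℝ) (CD0 : Tt → W → ℝ) (CD : Tt → W → Rb → ℝ) (δ : Rb → J → ℕ)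

theorem concaveOn_PiS [Fintype Tt] (hθ : 0 < θ) (j : J) :
    ConcaveOn ℝ Set.univ (PiS θ CS0 CS j : (Tt × J → ℝ) → ℝ) :=
  concaveOn_logitExpectedMin _ hθ (fun t =>
    (concaveOn_const _ convex_univ).add ((LinearMap.proj (t, j)).concaveOn convex_univ))
    convex_univ

theorem concaveOn_PiD [Fintype J] [Fintype Rb] (hφ : 0 < φ) (t : Tt) (w : W) :
    ConcaveOn ℝ Set.univ (PiD φ CD0 CD δ t w : (Tt × J → ℝ) → ℝ) := by
  refine concaveOn_logitExpectedMin _ hφ (fun r => ?_) convex_univ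
  let L : (Tt × J → ℝ) →ₗ[ℝ] ℝ := ∑ j, (δ r j : ℝ) • LinearMap.proj (t, j)
  exact ((concaveOn_const (CD t w r) convex_univ).sub (L.convexOn convex_univ)).congr
    fun p _ => by simp [L]

variable [Fintype J] [Fintype Tt] [Fintype W] [Fintype Rb]

theorem concaveOn_dualG (hθ : 0 < θ) (hφ : 0 < φ) (hNS : ∀ j, 0 < NS j)
    (hND : ∀ t w, 0 < ND t w) : ConcaveOn ℝ Set.univ (dualG θ φ NS ND CS0 CS CD0 CD δ) :=
  (ConcaveOn.sum (fun j _ => (concaveOn_PiS CS0 CS hθ j).smul (hNS j).le) convex_univ).add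
    (ConcaveOn.sum (fun t _ => ConcaveOn.sum
      (fun w _ => (concaveOn_PiD CD0 CD δ hφ t w).smul (hND t w).le) convex_univ) convex_univ)

theorem differentiable_dualG : Differentiable ℝ (dualG θ φ NS ND CS0 CS CD0 CD δ) := by
  have hS : ∀ j, Differentiable ℝ (PiS θ CS0 CS j : (Tt × J → ℝ) → ℝ) := fun j =>
    differentiable_logitExpectedMin _ fun t => by fun_prop
  have hD : ∀ t w, Differentiable ℝ (PiD φ CD0 CD δ t w : (Tt × J → ℝ) → ℝ) := fun t w =>
    differentiable_logitExpectedMin _ fun r => by fun_prop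
  exact (Differentiable.fun_sum fun j _ => (hS j).const_mul _).add
    (.fun_sum fun t _ => .fun_sum fun w _ => (hD t w).const_mul _)

theorem hasDerivAt_sum_PiS_update [DecidableEq Tt] [DecidableEq J] (hθ : θ ≠ 0)
    (p : Tt × J → ℝ) (t : Tt) (j : J) :
    HasDerivAt (fun z => ∑ j', NS j' * PiS θ CS0 CS j' (Function.update p (t, j) z))
      (ystar θ NS CS0 CS j t p) (p (t, j)) := by
  have h := HasDerivAt.fun_sum (u := univ) fun j' _ =>
    (hasDerivAt_logitExpectedMin (CS0 j') hθ fun t' =>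
      (hasDerivAt_update_apply p (t, j) (t', j')).const_add (CS j' t')).const_mul (NS j')
  simp only [Function.update_eq_self] at h
  refine h.congr_deriv ?_
  simp only [Pi.single_apply, Prod.mk.injEq, ite_and, ite_mul, one_mul, zero_mul,
    sum_ite_eq', mem_univ, if_true, mul_ite, mul_zero]
  rfl

theorem hasDerivAt_sum_PiD_update [DecidableEq Tt] [DecidableEq J] (hφ : φ ≠ 0)
    (p : Tt × J → ℝ) (t : Tt) (j : J) :
    HasDerivAt (fun z => ∑ t', ∑ w, ND t' w * PiD φ CD0 CD δ t' w (Function.update p (t, j) z))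
      (-∑ w, ∑ r, (δ r j : ℝ) * fstar φ ND CD0 CD δ t w r p) (p (t, j)) := by
  have h := HasDerivAt.fun_sum (u := univ) fun t' _ => HasDerivAt.fun_sum (u := univ) fun w _ =>
    (hasDerivAt_logitExpectedMin (CD0 t' w) hφ fun r =>
      (HasDerivAt.fun_sum (u := univ) fun j' _ =>
        (hasDerivAt_update_apply p (t, j) (t', j')).const_mul (δ r j' : ℝ)).const_sub
          (CD t' w r)).const_mul (ND t' w)
  simp only [Function.update_eq_self] at h
  refine h.congr_deriv ?_
  rw [Fintype.sum_eq_single t fun t' ht' => by simp [ht']]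
  simp only [Pi.single_apply, Prod.mk.injEq, true_and, mul_ite, mul_one, mul_zero,
    sum_ite_eq', mem_univ, if_true, ← sum_neg_distrib, mul_sum]
  refine sum_congr rfl fun w _ => sum_congr rfl fun r _ => ?_
  simp only [fstar, PiD, logitExpectedMin]
  ring

end Model

section

variable {J Tt W Rb : Type*} [Fintype J] [Fintype Tt] [Fintype W] [Fintype Rb]

/-- The dual objective `G` is concave and differentiable in the price vector
`p`, and its partial derivative with respect to `p (t,j)` equals the excess
demand `y*_{j,t}(p) - Σ_w Σ_r δ_{r,j} f*_{(t,w),r}(p)`. -/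
theorem dualG_concave_differentiable_gradient
    [DecidableEq Tt] [DecidableEq J]
    (θ φ : ℝ) (hθ : 0 < θ) (hφ : 0 < φ)
    (NS : J → ℝ) (hNS : ∀ j, 0 < NS j)
    (ND : Tt → W → ℝ) (hND : ∀ t w, 0 < ND t w)
    (CS0 : J → ℝ) (CS : J → Tt → ℝ) (CD0 : Tt → W → ℝ)
    (CD : Tt → W → Rb → ℝ) (δ : Rb → J → ℕ) :
    ConcaveOn ℝ Set.univ (dualG θ φ NS ND CS0 CS CD0 CD δ) ∧
    Differentiable ℝ (dualG θ φ NS ND CS0 CS CD0 CD δ) ∧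
    (∀ (p : Tt × J → ℝ) (t : Tt) (j : J),
      HasDerivAt
        (fun z : ℝ => dualG θ φ NS ND CS0 CS CD0 CD δ
          (Function.update p (t, j) z))
        (ystar θ NS CS0 CS j t p -
          ∑ w, ∑ r, (δ r j : ℝ) * fstar φ ND CD0 CD δ t w r p)
        (p (t, j))) := by
  refine ⟨concaveOn_dualG NS ND CS0 CS CD0 CD δ hθ hφ hNS hND,
    differentiable_dualG NS ND CS0 CS CD0 CD δ, fun p t j => ?_⟩
  exact ((hasDerivAt_sum_PiS_update NS CS0 CS hθ.ne' p t j).add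
    (hasDerivAt_sum_PiD_update ND CD0 CD δ hφ.ne' p t j)).congr_deriv (sub_eq_add_neg _ _).symm

end
end

section
/- For the linear program [SO] (relaxed): min Σ_b Σ_t n^b_t c^b_t + Σ_a Σ_r m^a_r c^a_r subject to Σ_t n^b_t = 1, Σ_r m^a_r = 1, n, m ≥ 0, and the demand-supply constraint Σ_{b∈B_j} n^b_t ≤ Σ_w Σ_{a∈A_{(t,w)}} Σ_r m^a_r δ_{r,j} for all (t,j), the KKT conditions are equivalent to the conjunction of: (i) each shipper's chosen alternative minimizes c^b_t + λ_{(t,j)} over t (with λ_{(0,j)} := 0); (ii) each driver's chosen bundle minimizes c^a_r - Σ_j δ_{r,j} λ_{(t,j)} over r; (iii) complementary slackness λ_{(t,j)}·(supply - demand) = 0 with λ ≥ 0 and supply ≥ demand. In particular any primal-dual optimal pair constitutes a market equilibrium with prices λ. -/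
open Finset in
/-- KKT conditions of the relaxed LP [SO] are equivalent to the market
equilibrium conditions: (i) every shipper's chosen alternative minimizes
`c^b_t + λ_{(t,j)}` (price 0 for the opt-out), (ii) every driver's chosen
bundle minimizes `c^a_r - Σ_j δ_{r,j} λ_{(t,j)}`, and (iii) dual feasibility,
supply ≥ demand, and complementary slackness; so any primal-dual optimal pair
constitutes a market equilibrium with prices `λ`. -/
theorem SO_KKT_iff_market_equilibrium
    (B A J Tt Rb : Type*) [Fintype B] [Fintype A] [Fintype J] [Fintype Tt]
    [Fintype Rb] [DecidableEq J] [DecidableEq Tt]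
    (taskOf : B → J) (twOf : A → Tt)
    (cS : B → Option Tt → ℝ) (cD : A → Option Rb → ℝ)
    (δ : Rb → J → ℕ) (lam : Tt × J → ℝ)
    (n : B → Option Tt → ℝ) (m : A → Option Rb → ℝ)
    (hn0 : ∀ b t, 0 ≤ n b t) (hn1 : ∀ b, (∑ t, n b t) = 1)
    (hm0 : ∀ a r, 0 ≤ m a r) (hm1 : ∀ a, (∑ r, m a r) = 1)
    (hds : ∀ (t : Tt) (j : J),
      (∑ b ∈ univ.filter fun b => taskOf b = j, n b (some t)) ≤
        ∑ a ∈ univ.filter fun a => twOf a = t,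
          ∑ r : Rb, (δ r j : ℝ) * m a (some r)) :
    (∃ μ : B → ℝ, ∃ ρ : A → ℝ,
      (∀ t j, 0 ≤ lam (t, j)) ∧
      (∀ (b : B) (t : Option Tt),
        0 ≤ cS b t + (t.elim (0 : ℝ) fun t' => lam (t', taskOf b)) - μ b ∧
        n b t * (cS b t + (t.elim (0 : ℝ) fun t' => lam (t', taskOf b)) - μ b)
          = 0) ∧
      (∀ (a : A) (r : Option Rb),
        0 ≤ cD a r -
            (∑ j, (r.elim (0 : ℝ) fun r' => (δ r' j : ℝ)) * lam (twOf a, j)) -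
            ρ a ∧
        m a r * (cD a r -
            (∑ j, (r.elim (0 : ℝ) fun r' => (δ r' j : ℝ)) * lam (twOf a, j)) -
            ρ a) = 0) ∧
      (∀ (t : Tt) (j : J),
        lam (t, j) *
          ((∑ a ∈ univ.filter fun a => twOf a = t,
              ∑ r : Rb, (δ r j : ℝ) * m a (some r)) -
            ∑ b ∈ univ.filter fun b => taskOf b = j, n b (some t)) = 0))
    ↔
    ((∀ (b : B) (t : Option Tt), 0 < n b t → ∀ t' : Option Tt,
        cS b t + (t.elim (0 : ℝ) fun s => lam (s, taskOf b)) ≤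
          cS b t' + (t'.elim (0 : ℝ) fun s => lam (s, taskOf b))) ∧
      (∀ (a : A) (r : Option Rb), 0 < m a r → ∀ r' : Option Rb,
        cD a r -
            (∑ j, (r.elim (0 : ℝ) fun s => (δ s j : ℝ)) * lam (twOf a, j)) ≤
          cD a r' -
            (∑ j, (r'.elim (0 : ℝ) fun s => (δ s j : ℝ)) * lam (twOf a, j))) ∧
      (∀ (t : Tt) (j : J),
        0 ≤ lam (t, j) ∧
        (∑ b ∈ univ.filter fun b => taskOf b = j, n b (some t)) ≤
          (∑ a ∈ univ.filter fun a => twOf a = t,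
            ∑ r : Rb, (δ r j : ℝ) * m a (some r)) ∧
        lam (t, j) *
          ((∑ a ∈ univ.filter fun a => twOf a = t,
              ∑ r : Rb, (δ r j : ℝ) * m a (some r)) -
            ∑ b ∈ univ.filter fun b => taskOf b = j, n b (some t)) = 0)) := by

  constructor
  · rintro ⟨μ, ρ, hlam, hS, hD, hcs⟩
    refine ⟨?_, ?_, fun t j => ⟨hlam t j, hds t j, hcs t j⟩⟩
    · intro b t ht t'
      have h1 := (hS b t).2
      have h2 := (hS b t').1
      have h3 : cS b t + (t.elim (0 : ℝ) fun t' => lam (t', taskOf b)) - μ b = 0 := by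
        rcases mul_eq_zero.mp h1 with h | h
        · exact absurd h ht.ne'
        · exact h
      linarith
    · intro a r hr r'
      have h1 := (hD a r).2
      have h2 := (hD a r').1
      have h3 : cD a r -
          (∑ j, (r.elim (0 : ℝ) fun r' => (δ r' j : ℝ)) * lam (twOf a, j)) - ρ a = 0 := by
        rcases mul_eq_zero.mp h1 with h | h
        · exact absurd h hr.ne'
        · exact h
      linarith
  · rintro ⟨hS, hD, hcs⟩
    refine ⟨fun b => univ.inf' ⟨none, mem_univ none⟩
        (fun t => cS b t + (t.elim (0 : ℝ) fun t' => lam (t', taskOf b))),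
      fun a => univ.inf' ⟨none, mem_univ none⟩
        (fun r => cD a r - (∑ j, (r.elim (0 : ℝ) fun r' => (δ r' j : ℝ)) * lam (twOf a, j))),
      fun t j => (hcs t j).1, ?_, ?_, fun t j => (hcs t j).2.2⟩
    · intro b t
      have hle := Finset.inf'_le (b := t)
        (f := fun t => cS b t + (t.elim (0 : ℝ) fun t' => lam (t', taskOf b)))
        (mem_univ t)
      refine ⟨by linarith, ?_⟩
      rcases (hn0 b t).lt_or_eq with h | h
      · have heq : cS b t + (t.elim (0 : ℝ) fun t' => lam (t', taskOf b)) =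
            univ.inf' ⟨none, mem_univ none⟩
              (fun t => cS b t + (t.elim (0 : ℝ) fun t' => lam (t', taskOf b))) := by
          refine le_antisymm ?_ hle
          exact Finset.le_inf' _ _ (fun t' _ => hS b t h t')
        beta_reduce
        rw [← heq]
        ring
      · rw [← h, zero_mul]
    · intro a r
      have hle := Finset.inf'_le (b := r)
        (f := fun r => cD a r - (∑ j, (r.elim (0 : ℝ) fun r' => (δ r' j : ℝ)) * lam (twOf a, j)))
        (mem_univ r)
      refine ⟨by linarith, ?_⟩
      rcases (hm0 a r).lt_or_eq with h | h
      · have heq : cD a r - (∑ j, (r.elim (0 : ℝ) fun r' => (δ r' j : ℝ)) * lam (twOf a, j)) =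
            univ.inf' ⟨none, mem_univ none⟩
              (fun r => cD a r -
                (∑ j, (r.elim (0 : ℝ) fun r' => (δ r' j : ℝ)) * lam (twOf a, j))) := by
          refine le_antisymm ?_ hle
          exact Finset.le_inf' _ _ (fun r' _ => hD a r h r')
        beta_reduce
        rw [← heq]
        ring
      · rw [← h, zero_mul]
end
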